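/- arXiv:1711.06735 — 5 statements merged into one kernel-verified Lean document; each statement's English description precedes it below -/
import Mathlib

section
/- Let d ≥ 2 and let f(X) = aX + b ∈ ℤ[X] be a linear polynomial. Then for every finite word w over {0,…,d−1}, the iterated section f|_w is a linear polynomial of the form aX + c with |c| ≤ max(|a|,|b|). Consequently the set of iterated sections {f|_w : w a finite word over {0,…,d−1}} is finite. -/
/-!
The section of `a X + c` at a letter `x` is `a X + (c + a x) div d`: the leading coefficient
never changes. If `|a|, |c| ≤ M` and `0 ≤ x ≤ d - 1`, then `|c + a x| ≤ M + M (d - 1) = M d`,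
so the new constant term again lies in `[-M, M]`. Starting from `M = max |a| |b|`, every
iterated section is one of the finitely many polynomials `a X + c` with `|c| ≤ M`.
-/

open Polynomial

/-- The section of `f ∈ ℤ[X]` at a first-level vertex `x₀ ∈ {0, …, d-1}`:
`f|_{x₀}(X) = (f(x₀) div d) + ∑_{i=1}^{t} (f^{(i)}(x₀)/i!) d^{i-1} X^i`, where
`f^{(i)}/i!` is the `i`-th Hasse derivative and `div` is the quotient in division
with remainder in `{0, …, d-1}` (Euclidean division). -/
noncomputable def psection (d : ℤ) (f : ℤ[X]) (x₀ : ℤ) : ℤ[X] :=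
  C ((f.eval x₀).ediv d) +
    ∑ i ∈ Finset.Icc 1 f.natDegree, C ((Polynomial.hasseDeriv i f).eval x₀ * d ^ (i - 1)) * X ^ i

/-- Iterated section of `f` along a word `w = x₁ … x_n`: `f|_w = (…(f|_{x₁})|_{x₂} …)|_{x_n}`. -/
noncomputable def itSection (d : ℤ) (f : ℤ[X]) (w : List ℤ) : ℤ[X] :=
  w.foldl (psection d) f

theorem itSection_cons (d : ℤ) (f : ℤ[X]) (x : ℤ) (w : List ℤ) :
    itSection d f (x :: w) = itSection d (psection d f x) w :=
  rfl

theorem psection_linear (d c a x : ℤ) :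
    psection d (C c + C a * X) x = C ((c + a * x) / d) + C a * X := by
  have hediv (n : ℤ) : n.ediv d = n / d := rfl
  rcases eq_or_ne a 0 with rfl | ha
  · simp [psection, hediv]
  · have hdeg : (C c + C a * X).natDegree = 1 := by
      rw [add_comm]
      exact natDegree_linear ha
    rw [psection, hdeg, Finset.Icc_self, Finset.sum_singleton]
    simp [hediv, hasseDeriv_one]

theorem abs_ediv_le_of_abs_le_mul {n d M : ℤ} (hd : 0 < d) (hn : |n| ≤ M * d) :
    |n / d| ≤ M := by
  rw [abs_le] at hn ⊢
  exact ⟨Int.le_ediv_of_mul_le hd (by linarith), Int.ediv_le_of_le_mul hd hn.2⟩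

theorem abs_add_mul_ediv_le {d c a x M : ℤ} (hx₀ : 0 ≤ x) (hxd : x < d)
    (hc : |c| ≤ M) (ha : |a| ≤ M) : |(c + a * x) / d| ≤ M := by
  apply abs_ediv_le_of_abs_le_mul (hx₀.trans_lt hxd)
  have hax : |a| * x ≤ M * (d - 1) :=
    mul_le_mul ha (by linarith) hx₀ ((abs_nonneg a).trans ha)
  calc |c + a * x| ≤ |c| + |a| * x :=
        (abs_add_le _ _).trans_eq (by rw [abs_mul, abs_of_nonneg hx₀])
    _ ≤ M * d := by linarith

theorem itSection_linear_of_abs_le {d a M : ℤ} (ha : |a| ≤ M) (w : List ℤ)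
    (hw : ∀ x ∈ w, 0 ≤ x ∧ x < d) {c : ℤ} (hc : |c| ≤ M) :
    ∃ c' : ℤ, itSection d (C c + C a * X) w = C c' + C a * X ∧ |c'| ≤ M := by
  induction w generalizing c with
  | nil => exact ⟨c, rfl, hc⟩
  | cons x w ih =>
    obtain ⟨hx₀, hxd⟩ := hw x List.mem_cons_self
    rw [itSection_cons, psection_linear]
    exact ih (fun y hy => hw y (List.mem_cons_of_mem x hy)) (abs_add_mul_ediv_le hx₀ hxd hc ha)

theorem linear_polynomial_finitely_many_sections_general (d : ℕ) (a b : ℤ)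
    (f : ℤ[X]) (hf : f = C b + C a * X) :
    (∀ w : List ℤ, (∀ x ∈ w, 0 ≤ x ∧ x < (d : ℤ)) →
        ∃ c : ℤ, itSection d f w = C c + C a * X ∧ |c| ≤ max |a| |b|) ∧
    Set.Finite {g : ℤ[X] |
        ∃ w : List ℤ, (∀ x ∈ w, 0 ≤ x ∧ x < (d : ℤ)) ∧ g = itSection d f w} := by
  have hsections : ∀ w : List ℤ, (∀ x ∈ w, 0 ≤ x ∧ x < (d : ℤ)) →
      ∃ c : ℤ, itSection d f w = C c + C a * X ∧ |c| ≤ max |a| |b| := fun w hw =>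
    hf ▸ itSection_linear_of_abs_le (le_max_left _ _) w hw (le_max_right _ _)
  refine ⟨hsections, (Set.finite_Icc (-max |a| |b|) (max |a| |b|)).image
    (fun c => C c + C a * X) |>.subset ?_⟩
  rintro g ⟨w, hw, rfl⟩
  obtain ⟨c, hc, hcM⟩ := hsections w hw
  exact ⟨c, abs_le.mp hcM, hc.symm⟩

/-- A linear polynomial `f = a X + b` has finitely many iterated sections: each iterated
section is of the form `a X + c` with `|c| ≤ max |a| |b|`. -/
theorem linear_polynomial_finitely_many_sections (d : ℕ) (hd : 2 ≤ d) (a b : ℤ)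
    (f : ℤ[X]) (hf : f = C b + C a * X) :
    (∀ w : List ℤ, (∀ x ∈ w, 0 ≤ x ∧ x < (d : ℤ)) →
        ∃ c : ℤ, itSection d f w = C c + C a * X ∧ |c| ≤ max |a| |b|) ∧
    Set.Finite {g : ℤ[X] |
        ∃ w : List ℤ, (∀ x ∈ w, 0 ≤ x ∧ x < (d : ℤ)) ∧ g = itSection d f w} :=
  linear_polynomial_finitely_many_sections_general d a b f hf
end

section
/- (Rivest's characterization.) A polynomial f(X) = a₀ + a₁X + ⋯ + a_tX^t ∈ ℤ[X] induces a permutation of ℤ/2ⁿℤ for every n ≥ 1 (i.e., is 2-permutational) if and only if: (i) a₁ is odd; (ii) a₂ + a₄ + a₆ + ⋯ is even; (iii) a₃ + a₅ + a₇ + ⋯ is even. -/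
open Polynomial

/-- A polynomial `f ∈ ℤ[X]` is `2`-permutational if for every `n ≥ 1` the induced map
`ZMod (2 ^ n) → ZMod (2 ^ n)` (sending the class of `k` to the class of `f k`)
is a bijection. -/
def Permutational2 (f : ℤ[X]) : Prop :=
  ∀ n : ℕ, 1 ≤ n → Function.Bijective (fun x : ZMod (2 ^ n) => aeval x f)

/-- The sum of the even-indexed coefficients `a₂ + a₄ + a₆ + ⋯` of `f`. -/
noncomputable def evenCoeffSum (f : ℤ[X]) : ℤ :=
  ∑ i ∈ (Finset.range (f.natDegree + 1)).filter (fun i => Even i ∧ 2 ≤ i), f.coeff i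

/-- The sum of the odd-indexed coefficients `a₃ + a₅ + a₇ + ⋯` of `f`. -/
noncomputable def oddCoeffSum (f : ℤ[X]) : ℤ :=
  ∑ i ∈ (Finset.range (f.natDegree + 1)).filter (fun i => Odd i ∧ 3 ≤ i), f.coeff i

open Finset in
lemma sum_split {M : Type*} [AddCommMonoid M] {n : ℕ} (hn : 2 ≤ n) (g : ℕ → M) :
    ∑ i ∈ Finset.range n, g i
      = g 0 + g 1 + (∑ i ∈ (Finset.range n).filter (fun i => Even i ∧ 2 ≤ i), g i)
        + ∑ i ∈ (Finset.range n).filter (fun i => Odd i ∧ 3 ≤ i), g i := by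
  classical
  rw [← Finset.sum_filter_add_sum_filter_not (Finset.range n) (fun i => 2 ≤ i) g]
  have h1 : (Finset.range n).filter (fun i => ¬ 2 ≤ i) = {0, 1} := by
    ext i
    simp only [Finset.mem_filter, Finset.mem_range, Finset.mem_insert, Finset.mem_singleton]
    omega
  have h2 : (Finset.range n).filter (fun i => 2 ≤ i)
      = ((Finset.range n).filter (fun i => Even i ∧ 2 ≤ i))
        ∪ ((Finset.range n).filter (fun i => Odd i ∧ 3 ≤ i)) := by
    rw [← Finset.filter_or]
    apply Finset.filter_congr
    intro i _
    simp only [Nat.odd_iff, Nat.even_iff, eq_iff_iff]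
    omega
  have h3 : Disjoint ((Finset.range n).filter (fun i => Even i ∧ 2 ≤ i))
      ((Finset.range n).filter (fun i => Odd i ∧ 3 ≤ i)) := by
    apply Finset.disjoint_filter_filter'
    rw [disjoint_iff]
    ext i
    simp [Nat.odd_iff, Nat.even_iff]
    omega
  rw [h1, h2, Finset.sum_union h3, Finset.sum_pair (by norm_num : (0:ℕ) ≠ 1)]
  abel

variable (f : ℤ[X])

lemma eval_one_eq (hd : 1 ≤ f.natDegree) :
    f.eval 1 = f.coeff 0 + f.coeff 1 + evenCoeffSum f + oddCoeffSum f := by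
  rw [eval_eq_sum_range, sum_split (by omega)]
  simp [evenCoeffSum, oddCoeffSum]

lemma aeval_intCast (m : ℕ) (k : ℤ) :
    aeval ((k : ZMod m)) f = ((f.eval k : ℤ) : ZMod m) := by
  have h := Polynomial.eval₂_hom (Int.castRingHom (ZMod m)) k (p := f)
  simpa [aeval_def, algebraMap_int_eq] using h

lemma cast_eval_sum (m : ℕ) (x : ℤ) :
    ((f.eval x : ℤ) : ZMod m)
      = ∑ i ∈ Finset.range (f.natDegree + 1), (f.coeff i : ZMod m) * ((x : ZMod m)) ^ i := by
  rw [eval_eq_sum_range]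
  push_cast
  rfl

lemma even_iff_cast (z : ℤ) : Even z ↔ (z : ZMod 2) = 0 := by
  rw [ZMod.intCast_zmod_eq_zero_iff_dvd]
  constructor
  · rintro ⟨k, rfl⟩; exact ⟨k, by ring⟩
  · rintro ⟨k, rfl⟩; exact ⟨k, by ring⟩

lemma odd_iff_cast (z : ℤ) : Odd z ↔ (z : ZMod 2) = 1 := by
  rw [← Int.not_even_iff_odd, even_iff_cast]
  generalize (z : ZMod 2) = a
  revert a; decide

lemma nat_even_cast_two {i : ℕ} (hi : Even i) : ((i : ZMod 2)) = 0 := by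
  obtain ⟨k, rfl⟩ := hi
  push_cast
  rw [← two_mul]
  simp [show (2 : ZMod 2) = 0 by decide]

lemma nat_odd_cast_two {i : ℕ} (hi : Odd i) : ((i : ZMod 2)) = 1 := by
  obtain ⟨k, rfl⟩ := hi
  push_cast
  simp [show (2 : ZMod 2) = 0 by decide]

lemma eval_two_eq (hd : 1 ≤ f.natDegree) :
    ((f.eval 2 : ℤ) : ZMod (2 ^ 2))
      = (f.coeff 0 : ZMod (2 ^ 2)) + 2 * (f.coeff 1 : ZMod (2 ^ 2)) := by
  rw [cast_eval_sum, sum_split (by omega)]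
  have h2 : ((2 : ℤ) : ZMod (2 ^ 2)) = 2 := by decide
  have hz : ∀ i : ℕ, 2 ≤ i → ((2 : ℤ) : ZMod (2 ^ 2)) ^ i = 0 := by
    intro i hi
    rw [h2, show i = 2 + (i - 2) by omega, pow_add]
    simp [show (2 : ZMod (2^2)) ^ 2 = 0 by decide]
  rw [Finset.sum_eq_zero (fun i hi => by
        simp only [Finset.mem_filter] at hi
        rw [hz i hi.2.2, mul_zero]),
      Finset.sum_eq_zero (fun i hi => by
        simp only [Finset.mem_filter] at hi
        rw [hz i (by omega : 2 ≤ i), mul_zero])]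
  rw [h2]
  ring

lemma eval_three_eq (hd : 1 ≤ f.natDegree) :
    ((f.eval 3 : ℤ) : ZMod (2 ^ 2))
      = (f.coeff 0 : ZMod (2 ^ 2)) - (f.coeff 1 : ZMod (2 ^ 2))
        + (evenCoeffSum f : ZMod (2 ^ 2)) - (oddCoeffSum f : ZMod (2 ^ 2)) := by
  rw [cast_eval_sum, sum_split (by omega)]
  have h3 : ((3 : ℤ) : ZMod (2 ^ 2)) = -1 := by decide
  rw [h3]
  have he : ∑ i ∈ (Finset.range (f.natDegree + 1)).filter (fun i => Even i ∧ 2 ≤ i),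
      (f.coeff i : ZMod (2 ^ 2)) * (-1 : ZMod (2^2)) ^ i
      = (evenCoeffSum f : ZMod (2 ^ 2)) := by
    rw [evenCoeffSum]; push_cast
    apply Finset.sum_congr rfl
    intro i hi
    simp only [Finset.mem_filter] at hi
    rw [hi.2.1.neg_one_pow, mul_one]
  have ho : ∑ i ∈ (Finset.range (f.natDegree + 1)).filter (fun i => Odd i ∧ 3 ≤ i),
      (f.coeff i : ZMod (2 ^ 2)) * (-1 : ZMod (2^2)) ^ i
      = - (oddCoeffSum f : ZMod (2 ^ 2)) := by
    rw [oddCoeffSum]; push_cast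
    rw [← Finset.sum_neg_distrib]
    apply Finset.sum_congr rfl
    intro i hi
    simp only [Finset.mem_filter] at hi
    rw [hi.2.1.neg_one_pow]
    ring
  rw [he, ho]
  ring

lemma deriv_eval_sum (x : ℤ) :
    f.derivative.eval x
      = ∑ i ∈ Finset.range (f.natDegree + 1), f.coeff i * i * x ^ (i - 1) := by
  rw [derivative_eval]
  exact Polynomial.sum_over_range' f (fun n => by simp) _ (Nat.lt_succ_self _)

lemma deriv_odd (hd : 1 ≤ f.natDegree) (hA : Odd (f.coeff 1)) (hO : Even (oddCoeffSum f))
    (x : ℤ) : Odd (f.derivative.eval x) := by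
  rw [odd_iff_cast, deriv_eval_sum]
  push_cast
  rcases Int.even_or_odd x with hx | hx
  · rw [(even_iff_cast x).mp hx]
    rw [Finset.sum_eq_single_of_mem 1 (by simp [Finset.mem_range]; omega)]
    · simpa using (odd_iff_cast _).mp hA
    · intro i _ hi1
      rcases Nat.eq_zero_or_pos i with rfl | hip
      · simp
      · rw [zero_pow (by omega : i - 1 ≠ 0), mul_zero]
  · rw [(odd_iff_cast x).mp hx]
    simp only [one_pow, mul_one]
    rw [sum_split (by omega) (fun i => (f.coeff i : ZMod 2) * (i : ZMod 2))]
    rw [Finset.sum_eq_zero (fun i hi => by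
          simp only [Finset.mem_filter] at hi
          rw [nat_even_cast_two hi.2.1, mul_zero])]
    have ho : ∑ i ∈ (Finset.range (f.natDegree + 1)).filter (fun i => Odd i ∧ 3 ≤ i),
        (f.coeff i : ZMod 2) * (i : ZMod 2) = (oddCoeffSum f : ZMod 2) := by
      rw [oddCoeffSum]; push_cast
      apply Finset.sum_congr rfl
      intro i hi
      simp only [Finset.mem_filter] at hi
      rw [nat_odd_cast_two hi.2.1, mul_one]
    rw [ho, (even_iff_cast _).mp hO]
    have : ((1:ℕ) : ZMod 2) = 1 := by decide
    rw [this, mul_one]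
    simpa using (odd_iff_cast _).mp hA

lemma two_dvd_iff_even (z : ℤ) : (2:ℤ) ∣ z ↔ Even z :=
  ⟨fun ⟨k, h⟩ => ⟨k, by omega⟩, fun ⟨k, h⟩ => ⟨k, by omega⟩⟩

lemma dvd_eval_sub' (m : ℤ) {x y : ℤ} (h : m ∣ x - y) : m ∣ f.eval x - f.eval y :=
  dvd_trans h (sub_dvd_eval_sub x y f)

lemma base_odd (hd : 1 ≤ f.natDegree) (hA : Odd (f.coeff 1)) (hE : Even (evenCoeffSum f))
    (hO : Even (oddCoeffSum f)) : Odd (f.eval 1 - f.eval 0) := by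
  rw [← coeff_zero_eq_eval_zero, eval_one_eq f hd]
  have : f.coeff 0 + f.coeff 1 + evenCoeffSum f + oddCoeffSum f - f.coeff 0
      = f.coeff 1 + (evenCoeffSum f + oddCoeffSum f) := by ring
  rw [this]
  exact hA.add_even (hE.add hO)

lemma key (hd : 1 ≤ f.natDegree) (hA : Odd (f.coeff 1)) (hE : Even (evenCoeffSum f))
    (hO : Even (oddCoeffSum f)) :
    ∀ n : ℕ, 1 ≤ n → ∀ x y : ℤ, (2:ℤ)^n ∣ f.eval x - f.eval y → (2:ℤ)^n ∣ x - y := by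
  intro n hn
  induction n, hn using Nat.le_induction with
  | base =>
    intro x y h
    rw [pow_one] at h ⊢
    by_contra hxy
    have hb := base_odd f hd hA hE hO
    rcases Int.even_or_odd x with hx | hx <;> rcases Int.even_or_odd y with hy | hy
    · exact hxy ((two_dvd_iff_even _).mpr (hx.sub hy))
    · -- x even, y odd
      have h0 : (2:ℤ) ∣ f.eval x - f.eval 0 := dvd_eval_sub' f 2 ((two_dvd_iff_even _).mpr (by simpa using hx))
      have h1 : (2:ℤ) ∣ f.eval y - f.eval 1 :=
        dvd_eval_sub' f 2 (by obtain ⟨k, rfl⟩ := hy; exact ⟨k, by ring⟩)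
      have : (2:ℤ) ∣ f.eval 1 - f.eval 0 := by
        have := dvd_sub (dvd_sub h0 h1) h
        have e : f.eval x - f.eval 0 - (f.eval y - f.eval 1) - (f.eval x - f.eval y)
            = f.eval 1 - f.eval 0 := by ring
        rwa [e] at this
      exact (Int.not_even_iff_odd.mpr hb) ((two_dvd_iff_even _).mp this)
    · -- x odd, y even
      have h0 : (2:ℤ) ∣ f.eval y - f.eval 0 := dvd_eval_sub' f 2 ((two_dvd_iff_even _).mpr (by simpa using hy))
      have h1 : (2:ℤ) ∣ f.eval x - f.eval 1 :=
        dvd_eval_sub' f 2 (by obtain ⟨k, rfl⟩ := hx; exact ⟨k, by ring⟩)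
      have : (2:ℤ) ∣ f.eval 1 - f.eval 0 := by
        have := dvd_sub (dvd_sub h0 h1) (dvd_neg.mpr h)
        have e : f.eval y - f.eval 0 - (f.eval x - f.eval 1) - -(f.eval x - f.eval y)
            = f.eval 1 - f.eval 0 := by ring
        rwa [e] at this
      exact (Int.not_even_iff_odd.mpr hb) ((two_dvd_iff_even _).mp this)
    · exact hxy ((two_dvd_iff_even _).mpr (hx.sub_odd hy))
  | succ n hn ih =>
    intro x y h
    have h' : (2:ℤ)^n ∣ x - y := ih x y (dvd_trans (pow_dvd_pow 2 (Nat.le_succ n)) h)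
    obtain ⟨t, ht⟩ := h'
    have hx : x = y + 2^n * t := by linarith
    obtain ⟨k, hk⟩ := (f.binomExpansion y (2^n * t))
    rw [hx] at h
    rw [hk] at h
    have h2 : (2:ℤ)^(n+1) ∣ 2^n * (f.derivative.eval y * t + k * (2^n * t^2)) := by
      have e : f.eval y + f.derivative.eval y * (2^n * t) + k * (2^n * t)^2 - f.eval y
          = 2^n * (f.derivative.eval y * t + k * (2^n * t^2)) := by ring
      rwa [e] at h
    rw [pow_succ'] at h2
    have h3 : (2:ℤ) ∣ f.derivative.eval y * t + k * (2^n * t^2) := by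
      have hne : (2:ℤ)^n ≠ 0 := pow_ne_zero _ (by norm_num)
      rw [show (2:ℤ) * 2^n = 2^n * 2 by ring] at h2
      exact (mul_dvd_mul_iff_left hne).mp (by rwa [mul_comm ((2:ℤ)^n) 2] at h2 ⊢)
    have h4 : (2:ℤ) ∣ k * (2^n * t^2) :=
      Dvd.dvd.mul_left (Dvd.dvd.mul_right (dvd_pow_self 2 (by omega : n ≠ 0)) _) k
    have h5 : (2:ℤ) ∣ f.derivative.eval y * t := (Int.dvd_add_right h4).mp (by rwa [add_comm] at h3)
    have h6 : Even t := by
      rcases Int.even_mul.mp ((two_dvd_iff_even _).mp h5) with he | he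
      · exact absurd he (Int.not_even_iff_odd.mpr (deriv_odd f hd hA hO y))
      · exact he
    obtain ⟨s, rfl⟩ := h6
    rw [hx]
    refine ⟨s, by ring⟩



/-- Rivest's characterization: `f = a₀ + a₁ X + ⋯ + a_t X^t ∈ ℤ[X]` induces a permutation
of `ℤ/2ⁿℤ` for every `n ≥ 1` if and only if `a₁` is odd, `a₂ + a₄ + a₆ + ⋯` is even, and
`a₃ + a₅ + a₇ + ⋯` is even. -/
theorem rivest_characterization (f : ℤ[X]) :
    Permutational2 f ↔
      Odd (f.coeff 1) ∧ Even (evenCoeffSum f) ∧ Even (oddCoeffSum f) := by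
  constructor
  · intro hP
    have hd : 1 ≤ f.natDegree := by
      by_contra hd
      have h0 : f.natDegree = 0 := by omega
      have hf := Polynomial.eq_C_of_natDegree_eq_zero h0
      have inj := (hP 1 le_rfl).injective
      have heq : (fun x : ZMod (2^1) => aeval x f) 0 = (fun x : ZMod (2^1) => aeval x f) 1 := by
        simp only
        rw [hf]
        simp
      exact absurd (inj heq) (by decide)
    have hA : Odd (f.coeff 1) := by
      by_contra h'
      have hA' : Even (f.coeff 1) := Int.not_odd_iff_even.mp h'
      obtain ⟨k, hk⟩ := hA'
      have inj := (hP 2 (by norm_num)).injective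
      have heq : (fun x : ZMod (2^2) => aeval x f) ((2:ℤ) : ZMod (2^2))
          = (fun x : ZMod (2^2) => aeval x f) ((0:ℤ) : ZMod (2^2)) := by
        simp only
        rw [aeval_intCast, aeval_intCast, eval_two_eq f hd, ← coeff_zero_eq_eval_zero]
        have hz : 2 * ((f.coeff 1 : ℤ) : ZMod (2^2)) = 0 := by
          rw [hk]
          calc 2 * ((k + k : ℤ) : ZMod (2^2)) = ((4 * k : ℤ) : ZMod (2^2)) := by push_cast; ring
            _ = 0 := by
                rw [Int.cast_mul, show ((4:ℤ) : ZMod (2^2)) = 0 from by decide, zero_mul]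
        rw [hz, add_zero]
      exact absurd (inj heq) (by decide)
    have hO : Even (oddCoeffSum f) := by
      by_contra h'
      have hO' : Odd (oddCoeffSum f) := Int.not_even_iff_odd.mp h'
      obtain ⟨m, hm⟩ := hA.add_odd hO'
      have inj := (hP 2 (by norm_num)).injective
      have heq : (fun x : ZMod (2^2) => aeval x f) ((3:ℤ) : ZMod (2^2))
          = (fun x : ZMod (2^2) => aeval x f) ((1:ℤ) : ZMod (2^2)) := by
        simp only
        rw [aeval_intCast, aeval_intCast, eval_three_eq f hd, eval_one_eq f hd]
        have hz : ((f.coeff 1 : ZMod (2^2)) + (oddCoeffSum f : ZMod (2^2)))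
            + ((f.coeff 1 : ZMod (2^2)) + (oddCoeffSum f : ZMod (2^2))) = 0 := by
          have hc : (f.coeff 1 : ZMod (2^2)) + (oddCoeffSum f : ZMod (2^2))
              = ((m + m : ℤ) : ZMod (2^2)) := by rw [← Int.cast_add, hm]
          rw [hc]
          calc ((m + m : ℤ) : ZMod (2^2)) + ((m + m : ℤ) : ZMod (2^2))
              = ((4 * m : ℤ) : ZMod (2^2)) := by push_cast; ring
            _ = 0 := by
                rw [Int.cast_mul, show ((4:ℤ) : ZMod (2^2)) = 0 from by decide, zero_mul]
        push_cast
        linear_combination -hz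
      exact absurd (inj heq) (by decide)
    have hE : Even (evenCoeffSum f) := by
      by_contra h'
      have hE' : Odd (evenCoeffSum f) := Int.not_even_iff_odd.mp h'
      obtain ⟨m, hm⟩ := (hA.add_odd hE').add hO
      have inj := (hP 1 le_rfl).injective
      have heq : (fun x : ZMod (2^1) => aeval x f) ((1:ℤ) : ZMod (2^1))
          = (fun x : ZMod (2^1) => aeval x f) ((0:ℤ) : ZMod (2^1)) := by
        simp only
        rw [aeval_intCast, aeval_intCast, eval_one_eq f hd, ← coeff_zero_eq_eval_zero]
        have hz : ((f.coeff 1 + evenCoeffSum f + oddCoeffSum f : ℤ) : ZMod (2^1)) = 0 := by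
          rw [hm]
          push_cast
          rw [← two_mul, show ((2:ZMod (2^1))) = 0 from by decide, zero_mul]
        push_cast at hz ⊢
        linear_combination hz
      exact absurd (inj heq) (by decide)
    exact ⟨hA, hE, hO⟩
  · rintro ⟨hA, hE, hO⟩
    have hd : 1 ≤ f.natDegree := by
      apply Polynomial.le_natDegree_of_ne_zero
      intro h
      rw [h] at hA
      exact (Int.not_odd_iff_even.mpr Even.zero) hA
    intro n hn
    haveI : NeZero (2^n) := ⟨pow_ne_zero n two_ne_zero⟩
    rw [← Finite.injective_iff_bijective]
    intro x y hxy
    have hx : ((ZMod.cast x : ℤ) : ZMod (2^n)) = x := ZMod.intCast_zmod_cast x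
    have hy : ((ZMod.cast y : ℤ) : ZMod (2^n)) = y := ZMod.intCast_zmod_cast y
    simp only at hxy
    rw [← hx, ← hy, aeval_intCast, aeval_intCast,
      ZMod.intCast_eq_intCast_iff_dvd_sub] at hxy
    push_cast at hxy
    have hkey := key f hd hA hE hO n hn _ _ hxy
    rw [← hx, ← hy, ZMod.intCast_eq_intCast_iff_dvd_sub]
    push_cast
    exact hkey
end

section
/- (Main theorem.) Let f(X) = a₀ + a₁X + ⋯ + a_tX^t ∈ ℤ[X] be 2-permutational. Then f is transitive mod 2ⁿ for every n ≥ 1 if and only if: (i) a₀ ≡ 1 (mod 2); (ii) 2a₂ ≡ a₃ + a₅ + a₇ + ⋯ (mod 4); (iii) a₂ + a₁ − 1 ≡ a₄ + a₆ + a₈ + ⋯ (mod 4). -/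
open Polynomial

/-- `f` is transitive mod `m`: the induced map on `ZMod m` has a single orbit. -/
def TransitiveMod (f : ℤ[X]) (m : ℕ) : Prop :=
  ∀ x y : ZMod m, ∃ k : ℕ, (fun z : ZMod m => aeval z f)^[k] x = y

/-- The sum of the even-indexed coefficients `a₄ + a₆ + a₈ + ⋯` of `f` with index ≥ 4. -/
noncomputable def evenCoeffSumFour (f : ℤ[X]) : ℤ :=
  ∑ i ∈ (Finset.range (f.natDegree + 1)).filter (fun i => Even i ∧ 4 ≤ i), f.coeff i

/-!
Everything is reduced to congruences between integers. Bijectivity mod 4 forces `f'` to take only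
odd values, so by Taylor expansion every iterate satisfies `fᵏ x - fᵏ y ≡ x - y (mod 2ⁿ⁺¹)`
whenever `x ≡ y (mod 2ⁿ)`. Hence `f^(2ⁿ)` is the identity mod `2ⁿ`, `f` is transitive mod `2ⁿ` iff
the orbit of `0` meets every residue, and transitivity lifts from `2ⁿ` to `2ⁿ⁺¹` iff
`f^(2ⁿ)(0) ≡ 2ⁿ (mod 2ⁿ⁺¹)`. For `n ≥ 2` the product of `f'` along `2ⁿ` consecutive points of an
orbit is the square of an odd number mod 4, since `f' mod 4` only depends on parity and `f²`
preserves parity; so `f^(2ⁿ)` even preserves differences mod `2ⁿ⁺²`, and the lifting condition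
propagates from `n` to `n + 1`. Only `n = 0, 1, 2` remain, and these are computed from `f` mod 8
at odd points and at points `≡ 2 (mod 4)`, where only `a₀, a₁, a₂` and the two coefficient sums
survive.
-/

open Function Finset

section Dynamics

variable {α : Type*} {g : α → α}

theorem Function.IsPeriodicPt.card_le_of_surjective_iterate [Fintype α] {a : α} {p : ℕ}
    (hp : 0 < p) (hper : IsPeriodicPt g p a) (hsurj : Surjective fun k => g^[k] a) :
    Fintype.card α ≤ p := by
  classical
  calc Fintype.card α = (univ : Finset α).card := card_univ.symm
    _ ≤ ((range p).image fun k => g^[k] a).card := card_le_card fun y _ => by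
        obtain ⟨k, rfl⟩ := hsurj y
        exact mem_image.2 ⟨k % p, mem_range.2 (Nat.mod_lt k hp), hper.iterate_mod_apply k⟩
    _ ≤ p := card_image_le.trans (card_range p).le

theorem exists_iterate_eq_of_iterate_eq_id {N : ℕ} (hN : 0 < N) (hid : g^[N] = id) {a : α}
    (hsurj : Surjective fun k => g^[k] a) (x y : α) : ∃ k, g^[k] x = y := by
  obtain ⟨i, rfl⟩ := hsurj x
  obtain ⟨j, rfl⟩ := hsurj y
  refine ⟨j + (N - 1) * i, ?_⟩
  have hk : j + (N - 1) * i + i = j + N * i := by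
    rw [add_assoc, ← Nat.succ_mul, Nat.succ_eq_add_one, Nat.sub_add_cancel hN]
  dsimp only
  rw [← iterate_add_apply, hk, iterate_add_apply, iterate_mul, hid, iterate_id, id]

end Dynamics

theorem Polynomial.aeval_intCast {R : Type*} [Ring R] (f : ℤ[X]) (x : ℤ) :
    aeval (x : R) f = ((f.eval x : ℤ) : R) := by
  simpa using aeval_algebraMap_apply_eq_algebraMap_eval (A := R) x f

theorem Polynomial.iterate_aeval_intCast {R : Type*} [Ring R] (f : ℤ[X]) (k : ℕ) (x : ℤ) :
    (fun z : R => aeval z f)^[k] (x : R) = (((f.eval ·)^[k] x : ℤ) : R) :=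
  (Semiconj.iterate_right (fun z => (f.aeval_intCast z).symm) k x).symm

theorem ZMod.intCast_eq_intCast_iff_two_pow {a b : ℤ} {n : ℕ} :
    (a : ZMod (2 ^ n)) = b ↔ a ≡ b [ZMOD 2 ^ n] := by
  exact_mod_cast ZMod.intCast_eq_intCast_iff a b (2 ^ n)

theorem Int.mul_modEq_self_of_dvd {a c d P : ℤ} (ha : c ∣ a) (hP : P ≡ 1 [ZMOD d]) :
    a * P ≡ a [ZMOD c * d] := by
  simpa using (hP.mul_left' (c := a)).of_dvd (mul_dvd_mul_right ha d)

theorem Int.modEq_or_modEq_add_of_modEq {a b c : ℤ} (h : a ≡ b [ZMOD c]) :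
    a ≡ b [ZMOD 2 * c] ∨ a ≡ b + c [ZMOD 2 * c] := by
  obtain ⟨t, ht⟩ := h.symm.dvd
  obtain ⟨j, rfl | rfl⟩ := t.even_or_odd'
  · exact .inl (Int.modEq_iff_dvd.2 ⟨-j, by linear_combination -ht⟩)
  · exact .inr (Int.modEq_iff_dvd.2 ⟨-j, by linear_combination -ht⟩)

theorem Int.pow_modEq_eight_of_odd {x : ℤ} (hx : Odd x) (i : ℕ) :
    x ^ i ≡ if Even i then 1 else x [ZMOD 8] := by
  have hsq : x ^ 2 ≡ 1 [ZMOD 8] := by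
    obtain ⟨m, rfl⟩ := hx
    obtain ⟨j, hj⟩ := Int.even_mul_succ_self m
    exact Int.modEq_iff_dvd.2 ⟨-j, by linear_combination (-4) * hj⟩
  obtain ⟨j, rfl | rfl⟩ := Nat.even_or_odd' i
  · simpa [pow_mul] using hsq.pow j
  · simpa [pow_succ, pow_mul, Nat.not_even_two_mul_add_one] using (hsq.pow j).mul_right x

section Congruences

variable (f : ℤ[X]) {c x y : ℤ}

theorem Int.ModEq.polynomial_eval (h : x ≡ y [ZMOD c]) : f.eval x ≡ f.eval y [ZMOD c] :=
  Int.modEq_iff_dvd.2 ((Int.modEq_iff_dvd.1 h).trans (sub_dvd_eval_sub y x f))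

theorem Int.ModEq.polynomial_iterate (h : x ≡ y [ZMOD c]) (k : ℕ) :
    (f.eval ·)^[k] x ≡ (f.eval ·)^[k] y [ZMOD c] := by
  induction k with
  | zero => exact h
  | succ k ih => simpa only [iterate_succ_apply'] using ih.polynomial_eval f

theorem eval_sub_eval_modEq (h : x ≡ y [ZMOD c]) :
    f.eval x - f.eval y ≡ (x - y) * (derivative f).eval y [ZMOD c ^ 2] := by
  obtain ⟨t, ht⟩ := Int.modEq_iff_dvd.1 h.symm
  obtain ⟨k, hk⟩ := f.binomExpansion y (x - y)
  rw [add_sub_cancel] at hk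
  exact Int.modEq_iff_dvd.2 ⟨-(k * t ^ 2), by rw [hk, ht]; ring⟩

theorem iterate_sub_iterate_modEq (h : x ≡ y [ZMOD c]) (k : ℕ) :
    (f.eval ·)^[k] x - (f.eval ·)^[k] y ≡
      (x - y) * ∏ i ∈ range k, (derivative f).eval ((f.eval ·)^[i] y) [ZMOD c ^ 2] := by
  induction k with
  | zero => simp [Int.ModEq.refl]
  | succ k ih =>
    rw [iterate_succ_apply', iterate_succ_apply', prod_range_succ, ← mul_assoc]
    exact (eval_sub_eval_modEq f (h.polynomial_iterate f k)).trans (ih.mul_right _)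

theorem derivative_eval_modEq_four (h : x ≡ y [ZMOD 2]) :
    (derivative f).eval x ≡ (derivative f).eval y [ZMOD 4] := by
  have h2 : (2 : ℤ) ∣ (derivative (derivative f)).eval y := by
    have := congr_fun (factorial_smul_hasseDeriv (R := ℤ) 2) f
    simp only [LinearMap.smul_apply, iterate_succ_apply, iterate_zero_apply] at this
    rw [← this, eval_smul, Nat.factorial_two, nsmul_eq_mul, Nat.cast_ofNat]
    exact dvd_mul_right _ _
  have h4 : (2 ^ 2 : ℤ) ∣ (x - y) * (derivative (derivative f)).eval y :=
    pow_two (2 : ℤ) ▸ mul_dvd_mul (Int.modEq_iff_dvd.1 h.symm) h2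
  have := dvd_sub (eval_sub_eval_modEq (derivative f) h).dvd h4
  rw [sub_sub_cancel_left, neg_sub] at this
  norm_num at this
  exact Int.modEq_iff_dvd.2 this

end Congruences

section Coefficients

theorem Polynomial.sum_coeff_filter_range_eq {R : Type*} [Semiring R] (f : R[X]) (p : ℕ → Prop)
    [DecidablePred p] (k : ℕ) :
    ∑ i ∈ (range (f.natDegree + 1)).filter p, f.coeff i =
      ∑ i ∈ (range k).filter p, f.coeff i +
        ∑ i ∈ (range (f.natDegree + 1)).filter (fun i => p i ∧ k ≤ i), f.coeff i := by
  rw [← sum_filter_add_sum_filter_not _ (fun i => k ≤ i), filter_filter, add_comm]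
  congr 1
  refine sum_subset (fun i => ?_) fun i hi hni => coeff_eq_zero_of_natDegree_lt ?_
  · simp only [mem_filter, mem_range, not_le]
    tauto
  · simp only [mem_filter, mem_range, not_le, not_and] at hi hni
    exact lt_of_not_ge fun hle => hni ⟨by omega, hi.2⟩ hi.1

variable (f : ℤ[X]) {x : ℤ}

theorem eval_modEq_of_odd (hx : Odd x) :
    f.eval x ≡ f.coeff 0 + (f.coeff 2 + evenCoeffSumFour f) +
      x * (f.coeff 1 + oddCoeffSum f) [ZMOD 8] := by
  have heven : ∑ i ∈ (range (f.natDegree + 1)).filter Even, f.coeff i =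
      f.coeff 0 + (f.coeff 2 + evenCoeffSumFour f) := by
    rw [f.sum_coeff_filter_range_eq _ 4, evenCoeffSumFour, ← add_assoc]
    congr 1
    simp [sum_filter, sum_range_succ, Nat.even_iff]
  have hodd : ∑ i ∈ (range (f.natDegree + 1)).filter (¬ Even ·), f.coeff i =
      f.coeff 1 + oddCoeffSum f := by
    rw [f.sum_coeff_filter_range_eq _ 3, oddCoeffSum]
    simp only [Nat.not_even_iff_odd]
    congr 1
    simp [sum_filter, sum_range_succ]
  calc f.eval x
        ≡ ∑ i ∈ range (f.natDegree + 1), f.coeff i * if Even i then 1 else x [ZMOD 8] := by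
        rw [eval_eq_sum_range]
        exact Int.ModEq.sum fun i _ => (Int.pow_modEq_eight_of_odd hx i).mul_left _
    _ = _ := by
        simp only [mul_ite, mul_one, sum_ite, ← sum_mul, heven, hodd]
        ring

theorem eval_modEq_of_modEq_two (hx : x ≡ 2 [ZMOD 4]) :
    f.eval x ≡ f.coeff 0 + f.coeff 1 * x + 4 * f.coeff 2 [ZMOD 8] := by
  -- `f = a₀ + X (a₁ + X (a₂ + X g))`, and `x² ≡ 4`, `x³ ≡ 0 (mod 8)`.
  have hdivX (p : ℤ[X]) : p.eval x = p.coeff 0 + x * p.divX.eval x := by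
    conv_lhs => rw [← divX_mul_X_add p]
    simp only [eval_add, eval_mul, eval_X, eval_C]
    ring
  rw [hdivX f, hdivX f.divX, hdivX f.divX.divX]
  simp only [coeff_divX]
  obtain ⟨t, ht⟩ := hx.symm.dvd
  obtain rfl : x = 2 + 4 * t := by linarith
  exact Int.modEq_iff_dvd.2
    ⟨-(f.coeff 2 * (2 * t + 2 * t ^ 2) + (1 + 2 * t) ^ 3 * f.divX.divX.divX.eval (2 + 4 * t)),
      by ring⟩

end Coefficients

-- `x₂, x₃, x₄` stand for `f²(0), f³(0), f⁴(0)`; `A, O, E` for `a₀` and the two coefficient sums.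
theorem orbit_conditions_iff {A a1 a2 O E x2 x3 x4 : ℤ} (hA : Odd A) (ha1 : Odd a1)
    (hO : Odd (a1 + O)) (hE : Even (a2 + E)) (hx2 : x2 ≡ A + (a2 + E) + A * (a1 + O) [ZMOD 8])
    (hx3 : x2 ≡ 2 [ZMOD 4] → x3 ≡ A + a1 * x2 + 4 * a2 [ZMOD 8])
    (hx4 : x4 ≡ A + (a2 + E) + x3 * (a1 + O) [ZMOD 8]) :
    (x2 ≡ 2 [ZMOD 4] ∧ x4 ≡ 4 [ZMOD 8]) ↔ (2 * a2 ≡ O [ZMOD 4] ∧ a2 + a1 - 1 ≡ E [ZMOD 4]) := by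
  obtain ⟨k, rfl⟩ := hA
  obtain ⟨b, rfl⟩ := ha1
  obtain ⟨l, hl⟩ := hO
  obtain ⟨m, hm⟩ := hE
  obtain rfl : O = 2 * l + 1 - (2 * b + 1) := by linarith
  obtain rfl : E = m + m - a2 := by linarith
  by_cases h2 : x2 ≡ 2 [ZMOD 4]
  · have hx3L := (hx3 h2).mul_right (2 * l + 1)
    obtain ⟨s, hs⟩ := h2.symm.dvd
    obtain rfl : x2 = 4 * s + 2 := by linarith
    unfold Int.ModEq at *
    ring_nf at *
    omega
  · unfold Int.ModEq at *
    ring_nf at *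
    omega

def OrbitCovers (f : ℤ[X]) (n : ℕ) : Prop :=
  ∀ y : ℤ, ∃ k : ℕ, (f.eval ·)^[k] 0 ≡ y [ZMOD 2 ^ n]

theorem orbitCovers_zero (f : ℤ[X]) : OrbitCovers f 0 :=
  fun _ => ⟨0, by simp [Int.modEq_one]⟩

theorem OrbitCovers.two_pow_le {f : ℤ[X]} {n p : ℕ} (hcov : OrbitCovers f n) (hp : 0 < p)
    (hret : (f.eval ·)^[p] 0 ≡ 0 [ZMOD 2 ^ n]) : 2 ^ n ≤ p := by
  have hper : IsPeriodicPt (fun z : ZMod (2 ^ n) => aeval z f) p 0 := by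
    rw [IsPeriodicPt, IsFixedPt, ← Int.cast_zero, iterate_aeval_intCast]
    exact ZMod.intCast_eq_intCast_iff_two_pow.2 hret
  have hsurj : Surjective fun k => (fun z : ZMod (2 ^ n) => aeval z f)^[k] 0 := fun z => by
    obtain ⟨y, rfl⟩ := ZMod.intCast_surjective z
    obtain ⟨k, hk⟩ := hcov y
    refine ⟨k, ?_⟩
    dsimp only
    rw [← Int.cast_zero, iterate_aeval_intCast]
    exact ZMod.intCast_eq_intCast_iff_two_pow.2 hk
  simpa using hper.card_le_of_surjective_iterate hp hsurj

namespace Permutational2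

variable {f : ℤ[X]} (hf : Permutational2 f) {x y : ℤ}
include hf

theorem modEq_of_eval_modEq {n : ℕ} (h : f.eval x ≡ f.eval y [ZMOD 2 ^ n]) :
    x ≡ y [ZMOD 2 ^ n] := by
  rcases n.eq_zero_or_pos with rfl | hn
  · simp [Int.modEq_one]
  refine ZMod.intCast_eq_intCast_iff_two_pow.1 ((hf n hn).injective ?_)
  simpa only [aeval_intCast] using ZMod.intCast_eq_intCast_iff_two_pow.2 h

theorem eval_modEq_two : f.eval x ≡ x + f.coeff 0 [ZMOD 2] := by
  have h10 : ¬ f.eval 1 ≡ f.eval 0 [ZMOD 2] := fun h => by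
    have := hf.modEq_of_eval_modEq (n := 1) (by simpa using h)
    simp [Int.ModEq] at this
  rw [coeff_zero_eq_eval_zero]
  rcases Int.emod_two_eq_zero_or_one x with hx | hx
  · have := (show x ≡ 0 [ZMOD 2] from hx).polynomial_eval f
    unfold Int.ModEq at *
    omega
  · have := (show x ≡ 1 [ZMOD 2] from hx).polynomial_eval f
    unfold Int.ModEq at *
    omega

theorem iterate_modEq_two (k : ℕ) : (f.eval ·)^[k] x ≡ x + k * f.coeff 0 [ZMOD 2] := by
  induction k with
  | zero => simp [Int.ModEq.refl]
  | succ k ih =>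
    rw [iterate_succ_apply']
    calc f.eval ((f.eval ·)^[k] x) ≡ (f.eval ·)^[k] x + f.coeff 0 [ZMOD 2] := hf.eval_modEq_two
      _ ≡ x + k * f.coeff 0 + f.coeff 0 [ZMOD 2] := ih.add_right _
      _ = x + ↑(k + 1) * f.coeff 0 := by push_cast; ring

theorem odd_derivative_eval : Odd ((derivative f).eval x) := by
  by_contra hev
  obtain ⟨d, hd⟩ := Int.not_odd_iff_even.1 hev
  have h2 : f.eval (x + 2) ≡ f.eval x [ZMOD 2 ^ 2] := by
    have := eval_sub_eval_modEq f (show x + 2 ≡ x [ZMOD 2] by simp [Int.ModEq])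
    rw [hd] at this
    unfold Int.ModEq at this ⊢
    omega
  have := hf.modEq_of_eval_modEq h2
  unfold Int.ModEq at this
  omega

theorem odd_prod_derivative_eval (s : Finset ℕ) (z : ℕ → ℤ) :
    Odd (∏ i ∈ s, (derivative f).eval (z i)) :=
  Finset.prod_induction _ Odd (fun _ _ => Odd.mul) odd_one fun _ _ => hf.odd_derivative_eval

theorem iterate_two_mul_modEq_two (j : ℕ) : (f.eval ·)^[2 * j] x ≡ x [ZMOD 2] :=
  (hf.iterate_modEq_two (2 * j)).trans
    (Int.modEq_iff_dvd.2 ⟨-(j * f.coeff 0), by push_cast; ring⟩)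

theorem iterate_sub_iterate_modEq_two_pow {n : ℕ} (h : x ≡ y [ZMOD 2 ^ n]) (k : ℕ) :
    (f.eval ·)^[k] x - (f.eval ·)^[k] y ≡ x - y [ZMOD 2 ^ (n + 1)] := by
  rcases n.eq_zero_or_pos with rfl | hn
  · simpa using (hf.iterate_modEq_two (x := x) k).sub (hf.iterate_modEq_two (x := y) k)
  have hP : ∏ i ∈ range k, (derivative f).eval ((f.eval ·)^[i] y) ≡ 1 [ZMOD 2] :=
    Int.odd_iff.1 (hf.odd_prod_derivative_eval _ _)
  refine ((iterate_sub_iterate_modEq f h k).of_dvd ?_).trans ?_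
  · rw [← pow_mul]
    exact pow_dvd_pow 2 (by omega)
  · rw [pow_succ]
    exact Int.mul_modEq_self_of_dvd h.symm.dvd hP

theorem iterate_two_pow_modEq (n : ℕ) (x : ℤ) : (f.eval ·)^[2 ^ n] x ≡ x [ZMOD 2 ^ n] := by
  induction n with
  | zero => simp [Int.modEq_one]
  | succ n ih =>
    set u := (f.eval ·)^[2 ^ n] x
    have hstep := (hf.iterate_sub_iterate_modEq_two_pow ih (2 ^ n)).add_right u
    have h2 : 2 ^ (n + 1) ∣ 2 * (u - x) :=
      pow_succ' (2 : ℤ) n ▸ mul_dvd_mul_left 2 ih.symm.dvd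
    rw [show 2 ^ (n + 1) = 2 ^ n + 2 ^ n by ring, iterate_add_apply]
    calc (f.eval ·)^[2 ^ n] u ≡ u - x + u [ZMOD 2 ^ (n + 1)] := by simpa [u] using hstep
      _ = x + 2 * (u - x) := by ring
      _ ≡ x + 0 [ZMOD 2 ^ (n + 1)] := Int.ModEq.add_left _ (Int.modEq_zero_iff_dvd.2 h2)
      _ = x := add_zero x

theorem prod_derivative_eval_iterate_modEq_one {n : ℕ} (hn : 2 ≤ n) (y : ℤ) :
    ∏ i ∈ range (2 ^ n), (derivative f).eval ((f.eval ·)^[i] y) ≡ 1 [ZMOD 4] := by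
  obtain ⟨n, rfl⟩ := Nat.exists_eq_add_of_le' hn
  set m := 2 ^ (n + 1)
  have hm : 2 ^ (n + 2) = m + m := by rw [pow_succ, mul_two]
  have hpair : ∏ i ∈ range m, (derivative f).eval ((f.eval ·)^[m + i] y) ≡
      ∏ i ∈ range m, (derivative f).eval ((f.eval ·)^[i] y) [ZMOD 4] :=
    Int.ModEq.prod fun i _ => derivative_eval_modEq_four f <| by
      rw [add_comm, iterate_add_apply]
      exact (pow_succ' 2 n ▸ hf.iterate_two_mul_modEq_two (2 ^ n)).polynomial_iterate f i
  have hQ := hf.odd_prod_derivative_eval (range m) fun i => (f.eval ·)^[i] y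
  rw [hm, prod_range_add]
  calc _ ≡ (∏ i ∈ range m, (derivative f).eval ((f.eval ·)^[i] y)) ^ 2 [ZMOD 4] := by
        rw [sq]
        exact (Int.ModEq.refl _).mul hpair
    _ ≡ 1 [ZMOD 4] := Int.sq_mod_four_eq_one_of_odd hQ

theorem iterate_two_pow_sub_modEq {n : ℕ} (hn : 2 ≤ n) (h : x ≡ y [ZMOD 2 ^ n]) :
    (f.eval ·)^[2 ^ n] x - (f.eval ·)^[2 ^ n] y ≡ x - y [ZMOD 2 ^ (n + 2)] := by
  refine ((iterate_sub_iterate_modEq f h (2 ^ n)).of_dvd ?_).trans ?_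
  · rw [← pow_mul]
    exact pow_dvd_pow 2 (by omega)
  · rw [pow_add]
    exact Int.mul_modEq_self_of_dvd h.symm.dvd (hf.prod_derivative_eval_iterate_modEq_one hn y)

theorem odd_coeff_one : Odd (f.coeff 1) := by
  simpa [← coeff_zero_eq_eval_zero, coeff_derivative] using hf.odd_derivative_eval (x := 0)

theorem odd_coeff_one_add_oddCoeffSum : Odd (f.coeff 1 + oddCoeffSum f) := by
  have h51 := hf.iterate_sub_iterate_modEq_two_pow (n := 2) (x := 5) (y := 1) (by decide) 1
  have h5 := eval_modEq_of_odd f (x := 5) (by decide)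
  have h1 := eval_modEq_of_odd f odd_one
  simp only [iterate_one] at h51
  rw [Int.odd_iff]
  unfold Int.ModEq at *
  omega

theorem even_coeff_two_add_evenCoeffSumFour : Even (f.coeff 2 + evenCoeffSumFour f) := by
  have h2 := hf.eval_modEq_two (x := 1)
  have h8 := eval_modEq_of_odd f odd_one
  have hL := Int.odd_iff.1 hf.odd_coeff_one_add_oddCoeffSum
  rw [Int.even_iff]
  unfold Int.ModEq at *
  omega

theorem transitiveMod_two_pow_iff (n : ℕ) : TransitiveMod f (2 ^ n) ↔ OrbitCovers f n := by
  refine ⟨fun h y => ?_, fun h => ?_⟩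
  · obtain ⟨k, hk⟩ := h ((0 : ℤ) : ZMod (2 ^ n)) y
    rw [iterate_aeval_intCast] at hk
    exact ⟨k, ZMod.intCast_eq_intCast_iff_two_pow.1 hk⟩
  refine exists_iterate_eq_of_iterate_eq_id (Nat.two_pow_pos n) (funext fun z => ?_) (a := 0)
    fun z => ?_
  · obtain ⟨x, rfl⟩ := ZMod.intCast_surjective z
    rw [iterate_aeval_intCast, id]
    exact ZMod.intCast_eq_intCast_iff_two_pow.2 (hf.iterate_two_pow_modEq n x)
  · obtain ⟨y, rfl⟩ := ZMod.intCast_surjective z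
    obtain ⟨k, hk⟩ := h y
    refine ⟨k, ?_⟩
    dsimp only
    rw [← Int.cast_zero, iterate_aeval_intCast]
    exact ZMod.intCast_eq_intCast_iff_two_pow.2 hk

theorem orbitCovers_succ_iff (n : ℕ) :
    OrbitCovers f (n + 1) ↔
      OrbitCovers f n ∧ (f.eval ·)^[2 ^ n] 0 ≡ 2 ^ n [ZMOD 2 ^ (n + 1)] := by
  set u := (f.eval ·)^[2 ^ n] 0
  have hu : u ≡ 0 [ZMOD 2 ^ n] := hf.iterate_two_pow_modEq n 0
  refine ⟨fun h => ⟨fun y => (h y).imp fun k hk => hk.of_dvd (pow_dvd_pow 2 n.le_succ), ?_⟩, ?_⟩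
  · have hlift : u ≡ 0 [ZMOD 2 ^ (n + 1)] ∨ u ≡ 2 ^ n [ZMOD 2 ^ (n + 1)] := by
      simpa [← pow_succ'] using Int.modEq_or_modEq_add_of_modEq hu
    refine hlift.resolve_left fun h0 => ?_
    have := h.two_pow_le (Nat.two_pow_pos n) h0
    rw [pow_succ] at this
    have := Nat.two_pow_pos n
    omega
  · rintro ⟨h, hc⟩ y
    obtain ⟨k, hk⟩ := h y
    rcases pow_succ' (2 : ℤ) n ▸ Int.modEq_or_modEq_add_of_modEq hk with hk' | hk'
    · exact ⟨k, hk'⟩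
    refine ⟨k + 2 ^ n, ?_⟩
    have hstep := hf.iterate_sub_iterate_modEq_two_pow hu k
    rw [iterate_add_apply]
    calc (f.eval ·)^[k] u = ((f.eval ·)^[k] u - (f.eval ·)^[k] 0) + (f.eval ·)^[k] 0 := by ring
      _ ≡ (u - 0) + (y + 2 ^ n) [ZMOD 2 ^ (n + 1)] := hstep.add hk'
      _ ≡ 2 ^ n + (y + 2 ^ n) [ZMOD 2 ^ (n + 1)] := (sub_zero u ▸ hc).add_right _
      _ = y + 2 ^ (n + 1) := by ring
      _ ≡ y [ZMOD 2 ^ (n + 1)] := Int.add_modulus_modEq_iff.2 rfl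

theorem iterate_two_pow_succ_modEq {n : ℕ} (hn : 2 ≤ n)
    (h : (f.eval ·)^[2 ^ n] 0 ≡ 2 ^ n [ZMOD 2 ^ (n + 1)]) :
    (f.eval ·)^[2 ^ (n + 1)] 0 ≡ 2 ^ (n + 1) [ZMOD 2 ^ (n + 2)] := by
  set u := (f.eval ·)^[2 ^ n] 0
  have hstep := hf.iterate_two_pow_sub_modEq hn (hf.iterate_two_pow_modEq n 0)
  rw [show 2 ^ (n + 1) = 2 ^ n + 2 ^ n by ring, iterate_add_apply]
  calc (f.eval ·)^[2 ^ n] u = ((f.eval ·)^[2 ^ n] u - u) + u := by ring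
    _ ≡ (u - 0) + u [ZMOD 2 ^ (n + 2)] := hstep.add_right u
    _ = 2 * u := by ring
    _ ≡ 2 * 2 ^ n [ZMOD 2 ^ (n + 2)] := pow_succ' (2 : ℤ) (n + 1) ▸ h.mul_left' (c := 2)
    _ = 2 ^ (n + 1) := (pow_succ' 2 n).symm

theorem forall_orbitCovers_iff :
    (∀ n, OrbitCovers f n) ↔ ∀ n ≤ 2, (f.eval ·)^[2 ^ n] 0 ≡ 2 ^ n [ZMOD 2 ^ (n + 1)] := by
  have hall : (∀ n, OrbitCovers f n) ↔ ∀ n, (f.eval ·)^[2 ^ n] 0 ≡ 2 ^ n [ZMOD 2 ^ (n + 1)] := by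
    refine ⟨fun h n => ((hf.orbitCovers_succ_iff n).1 (h (n + 1))).2, fun h n => ?_⟩
    induction n with
    | zero => exact orbitCovers_zero f
    | succ n ih => exact (hf.orbitCovers_succ_iff n).2 ⟨ih, h n⟩
  refine hall.trans ⟨fun h n _ => h n, fun h n => ?_⟩
  induction n with
  | zero => exact h 0 (by norm_num)
  | succ n ih =>
    by_cases hn : n + 1 ≤ 2
    · exact h _ hn
    · exact hf.iterate_two_pow_succ_modEq (by omega) ih

theorem iterate_two_four_modEq_iff (h0 : Odd (f.coeff 0)) :
    ((f.eval ·)^[2] 0 ≡ 2 [ZMOD 4] ∧ (f.eval ·)^[4] 0 ≡ 4 [ZMOD 8]) ↔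
      (2 * f.coeff 2 ≡ oddCoeffSum f [ZMOD 4] ∧
        f.coeff 2 + f.coeff 1 - 1 ≡ evenCoeffSumFour f [ZMOD 4]) := by
  have hodd3 : Odd ((f.eval ·)^[3] 0) := by
    have := hf.iterate_modEq_two (x := 0) 3
    rw [Int.odd_iff] at h0 ⊢
    unfold Int.ModEq at this
    push_cast at this
    omega
  refine orbit_conditions_iff (x3 := (f.eval ·)^[3] 0) h0 hf.odd_coeff_one
    hf.odd_coeff_one_add_oddCoeffSum hf.even_coeff_two_add_evenCoeffSumFour ?_ (fun h2 => ?_) ?_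
  · simpa [coeff_zero_eq_eval_zero] using eval_modEq_of_odd f h0
  · simpa only [iterate_succ_apply'] using eval_modEq_of_modEq_two f h2
  · simpa only [iterate_succ_apply' _ 3] using eval_modEq_of_odd f hodd3

end Permutational2

/-- Main theorem: a `2`-permutational polynomial `f = a₀ + a₁ X + ⋯ + a_t X^t` is transitive
mod `2 ^ n` for every `n ≥ 1` (i.e. acts level transitively on the binary tree) if and only
if `a₀ ≡ 1 (mod 2)`, `2 a₂ ≡ a₃ + a₅ + ⋯ (mod 4)`, and `a₂ + a₁ - 1 ≡ a₄ + a₆ + ⋯ (mod 4)`. -/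
theorem level_transitive_iff (f : ℤ[X]) (hf : Permutational2 f) :
    (∀ n : ℕ, 1 ≤ n → TransitiveMod f (2 ^ n)) ↔
      (f.coeff 0 ≡ 1 [ZMOD 2] ∧
       2 * f.coeff 2 ≡ oddCoeffSum f [ZMOD 4] ∧
       f.coeff 2 + f.coeff 1 - 1 ≡ evenCoeffSumFour f [ZMOD 4]) := by
  have hcov : (∀ n : ℕ, 1 ≤ n → TransitiveMod f (2 ^ n)) ↔ ∀ n, OrbitCovers f n := by
    simp only [hf.transitiveMod_two_pow_iff]
    refine ⟨fun h n => ?_, fun h n _ => h n⟩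
    rcases n.eq_zero_or_pos with rfl | hn
    exacts [orbitCovers_zero f, h n hn]
  have hcoeff0 : (f.eval ·)^[2 ^ 0] 0 ≡ 2 ^ 0 [ZMOD 2 ^ (0 + 1)] ↔ f.coeff 0 ≡ 1 [ZMOD 2] := by
    simp [coeff_zero_eq_eval_zero]
  rw [hcov, hf.forall_orbitCovers_iff]
  constructor
  · intro h
    have h0 := hcoeff0.1 (h 0 (by norm_num))
    exact ⟨h0, (hf.iterate_two_four_modEq_iff (Int.odd_iff.2 h0)).1
      ⟨by simpa using h 1 (by norm_num), by simpa using h 2 le_rfl⟩⟩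
  · rintro ⟨h0, h12⟩ n hn
    obtain ⟨h1, h2⟩ := (hf.iterate_two_four_modEq_iff (Int.odd_iff.2 h0)).2 h12
    interval_cases n
    exacts [hcoeff0.2 h0, h1, h2]
end

section
/- Let f(X) = a₀ + a₁X + ⋯ + a_tX^t ∈ ℤ[X] be 2-permutational with a₀ odd, and write a₁ = 2k + 1, a₂ + a₄ + a₆ + ⋯ = 2m, and a₃ + a₅ + a₇ + ⋯ = 2n (possible by Rivest's conditions). Then f is transitive mod 4 if and only if k + n ≡ m (mod 2). -/
open Polynomial

lemma zmod4_sq_sq : ∀ x : ZMod 4, x ^ 2 * x ^ 2 = x ^ 2 := by decide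

lemma zmod4_pow_aux (x : ZMod 4) (d : ℕ) : x ^ (2 * d + 2) = x ^ 2 := by
  induction d with
  | zero => norm_num
  | succ d ih =>
      have h : 2 * (d + 1) + 2 = (2 * d + 2) + 2 := by ring
      rw [h, pow_add, ih, zmod4_sq_sq x]

lemma zmod4_pow_even (x : ZMod 4) {i : ℕ} (he : Even i) (h2 : 2 ≤ i) : x ^ i = x ^ 2 := by
  obtain ⟨d, hd⟩ : ∃ d, i = 2 * d + 2 := by
    obtain ⟨c, rfl⟩ := he; exact ⟨c - 1, by omega⟩
  rw [hd, zmod4_pow_aux]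

lemma zmod4_pow_odd (x : ZMod 4) {i : ℕ} (ho : Odd i) (h3 : 3 ≤ i) : x ^ i = x ^ 3 := by
  obtain ⟨c, rfl⟩ := ho
  have h : 2 * c + 1 = (2 * (c - 1) + 2) + 1 := by omega
  rw [h, pow_succ, zmod4_pow_aux, ← pow_succ]

lemma aeval_zmod4 (f : ℤ[X]) (hdeg : 1 ≤ f.natDegree) (x : ZMod 4) :
    aeval x f = (f.coeff 0 : ZMod 4) + (f.coeff 1 : ZMod 4) * x
      + (evenCoeffSum f : ZMod 4) * x ^ 2 + (oddCoeffSum f : ZMod 4) * x ^ 3 := by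
  rw [aeval_eq_sum_range]
  simp_rw [zsmul_eq_mul]
  rw [← Finset.sum_filter_add_sum_filter_not (Finset.range (f.natDegree + 1))
    (fun i => 2 ≤ i)]
  have hsmall : (Finset.range (f.natDegree + 1)).filter (fun i => ¬ 2 ≤ i) = {0, 1} := by
    ext i
    simp only [Finset.mem_filter, Finset.mem_range, Finset.mem_insert, Finset.mem_singleton]
    omega
  rw [hsmall, Finset.sum_pair (by norm_num : (0:ℕ) ≠ 1)]
  rw [← Finset.sum_filter_add_sum_filter_not
    ((Finset.range (f.natDegree + 1)).filter (fun i => 2 ≤ i)) Even]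
  have heq1 : ((Finset.range (f.natDegree + 1)).filter (fun i => 2 ≤ i)).filter Even
      = (Finset.range (f.natDegree + 1)).filter (fun i => Even i ∧ 2 ≤ i) := by
    ext i
    simp only [Finset.mem_filter, Finset.mem_range]
    tauto
  have heq2 : ((Finset.range (f.natDegree + 1)).filter (fun i => 2 ≤ i)).filter (fun i => ¬ Even i)
      = (Finset.range (f.natDegree + 1)).filter (fun i => Odd i ∧ 3 ≤ i) := by
    ext i
    simp only [Finset.mem_filter, Finset.mem_range, Nat.even_iff, Nat.odd_iff]
    omega
  rw [heq1, heq2]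
  have hsum1 : ∑ i ∈ (Finset.range (f.natDegree + 1)).filter (fun i => Even i ∧ 2 ≤ i),
      (f.coeff i : ZMod 4) * x ^ i = (evenCoeffSum f : ZMod 4) * x ^ 2 := by
    rw [evenCoeffSum, Int.cast_sum, Finset.sum_mul]
    refine Finset.sum_congr rfl fun i hi => ?_
    simp only [Finset.mem_filter] at hi
    rw [zmod4_pow_even x hi.2.1 hi.2.2]
  have hsum2 : ∑ i ∈ (Finset.range (f.natDegree + 1)).filter (fun i => Odd i ∧ 3 ≤ i),
      (f.coeff i : ZMod 4) * x ^ i = (oddCoeffSum f : ZMod 4) * x ^ 3 := by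
    rw [oddCoeffSum, Int.cast_sum, Finset.sum_mul]
    refine Finset.sum_congr rfl fun i hi => ?_
    simp only [Finset.mem_filter] at hi
    rw [zmod4_pow_odd x hi.2.1 hi.2.2]
  rw [hsum1, hsum2]
  ring

/-- Let `f` be `2`-permutational with odd constant term, and write `a₁ = 2k + 1`,
`a₂ + a₄ + ⋯ = 2m`, `a₃ + a₅ + ⋯ = 2n`. Then `f` is transitive mod 4 if and only if
`k + n ≡ m (mod 2)`. -/
theorem transitive_mod_four_iff (f : ℤ[X]) (hf : Permutational2 f)
    (h0 : Odd (f.coeff 0)) (k m n : ℤ)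
    (hk : f.coeff 1 = 2 * k + 1)
    (hm : evenCoeffSum f = 2 * m)
    (hn : oddCoeffSum f = 2 * n) :
    TransitiveMod f 4 ↔ k + n ≡ m [ZMOD 2] := by
  have hdeg : 1 ≤ f.natDegree := by
    apply le_natDegree_of_ne_zero
    rw [hk]; omega
  set F : ZMod 4 → ZMod 4 := fun z => aeval z f with hFdef
  set A : ZMod 4 := (f.coeff 0 : ZMod 4) with hAdef
  set E : ZMod 4 := 2 * (k : ZMod 4) + 2 * (m : ZMod 4) + 2 * (n : ZMod 4) with hEdef
  have h4 : (4 : ZMod 4) = 0 := by decide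
  have hform : ∀ x : ZMod 4, F x = A + (2 * (k : ZMod 4) + 1) * x
      + 2 * (m : ZMod 4) * x ^ 2 + 2 * (n : ZMod 4) * x ^ 3 := by
    intro x
    rw [hFdef]
    simp only
    rw [aeval_zmod4 f hdeg, hk, hm, hn]
    push_cast
    ring
  obtain ⟨a, ha⟩ := h0
  have hA : A = 2 * (a : ZMod 4) + 1 := by
    rw [hAdef, ha]; push_cast; ring
  have hAne2 : A ≠ 2 := by
    rw [hA]; exact (by decide : ∀ c : ZMod 4, 2 * c + 1 ≠ 2) _
  have hA2 : A * A = 1 := by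
    rw [hA]; exact (by decide : ∀ c : ZMod 4, (2 * c + 1) * (2 * c + 1) = 1) _
  have hF0 : F 0 = A := by rw [hform]; ring
  have hF1 : F 1 = A + 1 + E := by rw [hform, hEdef]; ring
  have hF2 : F 2 = A + 2 := by
    rw [hform]
    linear_combination ((k : ZMod 4) + 2 * (m : ZMod 4) + 4 * (n : ZMod 4)) * h4
  have hF3 : F 3 = A + 3 + E := by
    rw [hform, hEdef]
    linear_combination ((k : ZMod 4) + 4 * (m : ZMod 4) + 13 * (n : ZMod 4)) * h4
  have hEiff : E = 0 ↔ k + n ≡ m [ZMOD 2] := by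
    have hE : E = ((2 * (k + m + n) : ℤ) : ZMod 4) := by rw [hEdef]; push_cast; ring
    rw [hE, ZMod.intCast_zmod_eq_zero_iff_dvd, Int.modEq_iff_dvd]
    constructor <;> intro h <;> omega
  have hEcases : E = 0 ∨ E = 2 := by
    have hE' : E = 2 * ((k : ZMod 4) + (m : ZMod 4) + (n : ZMod 4)) := by rw [hEdef]; ring
    rw [hE']
    exact (by decide : ∀ c : ZMod 4, 2 * c = 0 ∨ 2 * c = 2) _
  have hall : ∀ x : ZMod 4, x = 0 ∨ x = 1 ∨ x = 2 ∨ x = 3 := by decide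
  have htrans : E = 0 → TransitiveMod f 4 := by
    intro hE0
    have hFlin : ∀ x, F x = x + A := by
      intro x
      rcases hall x with h | h | h | h <;> subst h
      · rw [hF0]; ring
      · rw [hF1, hE0]; ring
      · rw [hF2]; ring
      · rw [hF3, hE0]; ring
    have hiter : ∀ (j : ℕ) (x : ZMod 4), F^[j] x = x + j * A := by
      intro j
      induction j with
      | zero => intro x; simp
      | succ j ih =>
          intro x
          rw [Function.iterate_succ_apply', ih, hFlin]
          push_cast
          ring
    intro x y
    refine ⟨((y - x) * A).val, ?_⟩
    show F^[((y - x) * A).val] x = y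
    rw [hiter, ZMod.natCast_val, ZMod.cast_id]
    linear_combination (y - x) * hA2
  have hnottrans : E = 2 → ¬ TransitiveMod f 4 := by
    intro hE2 htr
    have hFlin : ∀ x, F x = A - x := by
      intro x
      rcases hall x with h | h | h | h <;> subst h
      · rw [hF0]; ring
      · rw [hF1, hE2]; linear_combination h4
      · rw [hF2]; linear_combination h4
      · rw [hF3, hE2]; linear_combination 2 * h4
    have hinv : ∀ j : ℕ, F^[j] 0 = 0 ∨ F^[j] 0 = A := by
      intro j
      induction j with
      | zero => left; rfl
      | succ j ih =>
          rw [Function.iterate_succ_apply']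
          rcases ih with h | h
          · right; rw [h, hFlin]; ring
          · left; rw [h, hFlin]; ring
    obtain ⟨j, hj⟩ := htr 0 2
    have hj' : F^[j] 0 = 2 := hj
    rcases hinv j with h | h <;> rw [hj'] at h
    · exact (by decide : (2 : ZMod 4) ≠ 0) h
    · exact hAne2 h.symm
  constructor
  · intro htr
    rcases hEcases with h | h
    · exact hEiff.mp h
    · exact absurd htr (hnottrans h)
  · intro hmod
    exact htrans (hEiff.mpr hmod)
end

section
/- Let g(X) = b₀ + b₁X + ⋯ + b_tX^t ∈ ℤ[X] be 2-permutational with b₂ ≡ 0 (mod 2) and b₃ + b₅ + b₇ + ⋯ ≡ 0 (mod 4). For a 2-permutational polynomial h write k_h = (a₁(h) − 1)/2 and m_h = (a₂(h) + a₄(h) + a₆(h) + ⋯)/2, where aᵢ(h) is the i-th coefficient of h. Then (k_{g|₀} + k_{g|₁}) + (m_{g|₀} + m_{g|₁}) ≡ 0 (mod 2), where g|₀ and g|₁ are the sections of g at the two first-level vertices. -/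
open Polynomial

lemma psection_coeff (g : ℤ[X]) (x₀ : ℤ) (j : ℕ) (hj : 1 ≤ j) :
    (psection 2 g x₀).coeff j =
      if j ∈ Finset.Icc 1 g.natDegree then (hasseDeriv j g).eval x₀ * 2 ^ (j - 1) else 0 := by
  unfold psection
  rw [coeff_add, finset_sum_coeff]
  simp only [coeff_C_mul, coeff_X_pow, mul_ite, mul_one, mul_zero]
  have hj0 : j ≠ 0 := by omega
  rw [coeff_C, if_neg hj0, zero_add]
  have : ∀ i ∈ Finset.Icc 1 g.natDegree,
      (if j = i then (hasseDeriv i g).eval x₀ * 2 ^ (i-1) else 0)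
      = (if j = i then (hasseDeriv j g).eval x₀ * 2 ^ (j-1) else 0) := by
    intro i _
    split
    · subst ‹j = i›; rfl
    · rfl
  rw [Finset.sum_congr rfl this, Finset.sum_ite_eq]

lemma two_mul_choose_two (n : ℕ) : 2 * n.choose 2 = n * (n - 1) := by
  rw [Nat.choose_two_right, Nat.mul_div_cancel']
  cases n with
  | zero => simp
  | succ m =>
      rw [Nat.succ_sub_one]
      have : Even ((m+1) * m) := by
        rcases Nat.even_or_odd m with h | h
        · exact h.mul_left _
        · exact (h.add_one).mul_right _
      exact this.two_dvd

lemma nat_sq_choose (j : ℕ) : j + 2 * j.choose 2 = j * j := by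
  cases j with
  | zero => rfl
  | succ m => rw [two_mul_choose_two, Nat.succ_sub_one]; ring

lemma helper_mod4 (j : ℕ) :
    (4 : ℤ) ∣ ((j : ℤ) + 2 * (j.choose 2 : ℤ)) - (if Odd j then 1 else 0) := by
  have h := nat_sq_choose j
  have h' : (j : ℤ) + 2 * (j.choose 2 : ℤ) = (j : ℤ) * j := by
    exact_mod_cast congrArg (Nat.cast : ℕ → ℤ) h
  rw [h']
  rcases Nat.even_or_odd j with ⟨k, hk⟩ | ⟨k, hk⟩
  · rw [if_neg (by simp [Nat.odd_iff, Nat.even_iff] at *; omega)]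
    exact ⟨k * k, by subst hk; push_cast; ring⟩
  · rw [if_pos ⟨k, hk⟩]
    exact ⟨k * k + k, by subst hk; push_cast; ring⟩

lemma sum_even_aux (N : ℕ) (v : ℕ → ℤ) :
    (4 : ℤ) ∣ (∑ i ∈ (Finset.range (N+1)).filter (fun i => Even i ∧ 2 ≤ i), v i * 2^(i-1))
      - (if 2 ≤ N then v 2 * 2 else 0) := by
  rcases le_or_gt 2 N with h | h
  · rw [if_pos h]
    have h2 : (2:ℕ) ∈ (Finset.range (N+1)).filter (fun i => Even i ∧ 2 ≤ i) := by
      simp only [Finset.mem_filter, Finset.mem_range]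
      exact ⟨by omega, even_two, le_rfl⟩
    rw [← Finset.add_sum_erase _ _ h2]
    norm_num
    apply Finset.dvd_sum
    intro i hi
    simp only [Finset.mem_erase, Finset.mem_filter, Finset.mem_range] at hi
    obtain ⟨hne, _, hev, h2i⟩ := hi
    have h4i : 4 ≤ i := by rcases hev with ⟨k, hk⟩; omega
    have : (4:ℤ) ∣ 2^(i-1) := by
      have : (2:ℤ)^2 ∣ 2^(i-1) := pow_dvd_pow 2 (by omega)
      simpa using this
    exact this.mul_left _
  · rw [if_neg (by omega)]
    have he : (Finset.range (N+1)).filter (fun i => Even i ∧ 2 ≤ i) = ∅ := by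
      ext i
      simp only [Finset.mem_filter, Finset.mem_range, Finset.notMem_empty, iff_false]
      rintro ⟨h1, _, h3⟩; omega
    simp [he]

lemma my_hasseDeriv_eq_zero (g : ℤ[X]) (k : ℕ) (h : g.natDegree < k) : hasseDeriv k g = 0 := by
  ext m
  rw [hasseDeriv_coeff, coeff_eq_zero_of_natDegree_lt (by omega), mul_zero, coeff_zero]

lemma psection_natDegree (g : ℤ[X]) (x₀ : ℤ) (hN : 1 ≤ g.natDegree) :
    (psection 2 g x₀).natDegree = g.natDegree := by
  have hg0 : g ≠ 0 := fun h => by simp [h] at hN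
  apply le_antisymm
  · rw [natDegree_le_iff_coeff_eq_zero]
    intro m hm
    rw [psection_coeff g x₀ m (by omega), if_neg (by simp [Finset.mem_Icc]; omega)]
  · apply le_natDegree_of_ne_zero
    rw [psection_coeff g x₀ _ hN, if_pos (by simp [Finset.mem_Icc]; omega)]
    have hC : hasseDeriv g.natDegree g = C (g.coeff g.natDegree) := by
      ext m
      cases m with
      | zero => simp [hasseDeriv_coeff]
      | succ k =>
        rw [hasseDeriv_coeff, coeff_C, if_neg (Nat.succ_ne_zero k),
          coeff_eq_zero_of_natDegree_lt (by omega), mul_zero]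
    rw [hC, eval_C]
    have hlead : g.coeff g.natDegree ≠ 0 := by
      have := leadingCoeff_ne_zero.mpr hg0
      rwa [leadingCoeff] at this
    exact mul_ne_zero hlead (by positivity)

/-- Let `g` be `2`-permutational with `b₂ ≡ 0 (mod 2)` and `b₃ + b₅ + ⋯ ≡ 0 (mod 4)`.
Writing, for a `2`-permutational polynomial `h`, `k_h = (a₁(h) - 1)/2` and
`m_h = (a₂(h) + a₄(h) + ⋯)/2`, we have
`(k_{g|₀} + k_{g|₁}) + (m_{g|₀} + m_{g|₁}) ≡ 0 (mod 2)`. -/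
theorem sections_k_plus_m_even (g : ℤ[X]) (hg : Permutational2 g)
    (hb2 : 2 ∣ g.coeff 2) (hodd : (4 : ℤ) ∣ oddCoeffSum g)
    (k₀ k₁ m₀ m₁ : ℤ)
    (hk₀ : (psection 2 g 0).coeff 1 = 2 * k₀ + 1)
    (hk₁ : (psection 2 g 1).coeff 1 = 2 * k₁ + 1)
    (hm₀ : evenCoeffSum (psection 2 g 0) = 2 * m₀)
    (hm₁ : evenCoeffSum (psection 2 g 1) = 2 * m₁) :
    (k₀ + k₁) + (m₀ + m₁) ≡ 0 [ZMOD 2] := by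
  set N := g.natDegree with hNdef
  by_cases hN : 1 ≤ N
  swap
  · exfalso
    rw [psection_coeff g 0 1 le_rfl, if_neg (by simp [Finset.mem_Icc]; omega)] at hk₀
    omega
  -- coefficient facts
  have hk₀' : g.coeff 1 = 2 * k₀ + 1 := by
    rw [psection_coeff g 0 1 le_rfl, if_pos (by simp [Finset.mem_Icc]; omega)] at hk₀
    rw [← hk₀, ← coeff_zero_eq_eval_zero]
    simp [hasseDeriv_coeff, coeff_derivative]
  have hk₁' : (hasseDeriv 1 g).eval 1 = 2 * k₁ + 1 := by
    rw [psection_coeff g 1 1 le_rfl, if_pos (by simp [Finset.mem_Icc]; omega)] at hk₁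
    simpa using hk₁
  have hsec : ∀ x₀ : ℤ, evenCoeffSum (psection 2 g x₀)
      = ∑ i ∈ (Finset.range (N+1)).filter (fun i => Even i ∧ 2 ≤ i),
          (hasseDeriv i g).eval x₀ * 2 ^ (i-1) := by
    intro x₀
    unfold evenCoeffSum
    rw [psection_natDegree g x₀ hN]
    apply Finset.sum_congr rfl
    intro i hi
    simp only [Finset.mem_filter, Finset.mem_range] at hi
    rw [psection_coeff g x₀ i (by omega), if_pos (by simp [Finset.mem_Icc]; omega)]
  have hm₀' : ∑ i ∈ (Finset.range (N+1)).filter (fun i => Even i ∧ 2 ≤ i),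
      g.coeff i * 2^(i-1) = 2*m₀ := by
    rw [← hm₀, hsec 0]
    apply Finset.sum_congr rfl
    intro i _
    congr 1
    rw [← coeff_zero_eq_eval_zero]
    simp [hasseDeriv_coeff]
  have hm₁' : ∑ i ∈ (Finset.range (N+1)).filter (fun i => Even i ∧ 2 ≤ i),
      (hasseDeriv i g).eval 1 * 2^(i-1) = 2*m₁ := by
    rw [← hsec 1]; exact hm₁
  -- divisibility of the even sums minus their i = 2 terms
  have hS0 : (4:ℤ) ∣ 2*m₀ - g.coeff 2 * 2 := by
    rw [← hm₀']
    have h := sum_even_aux N (fun i => g.coeff i)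
    rcases le_or_gt 2 N with h2 | h2
    · rwa [if_pos h2] at h
    · rw [if_neg (by omega)] at h
      rw [coeff_eq_zero_of_natDegree_lt (by omega)]
      simpa using h
  have hS1 : (4:ℤ) ∣ 2*m₁ - (hasseDeriv 2 g).eval 1 * 2 := by
    rw [← hm₁']
    have h := sum_even_aux N (fun i => (hasseDeriv i g).eval 1)
    rcases le_or_gt 2 N with h2 | h2
    · rwa [if_pos h2] at h
    · rw [if_neg (by omega)] at h
      rw [my_hasseDeriv_eq_zero g 2 (by omega)]
      simpa using h
  -- eval-at-1 expansions
  have hD1 : (hasseDeriv 1 g).eval 1 = ∑ j ∈ Finset.range (N+4), (j : ℤ) * g.coeff j := by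
    rw [eval_eq_sum_range' (n := N+3)
      (lt_of_le_of_lt (natDegree_hasseDeriv_le g 1) (by omega)) 1]
    have : ∀ i ∈ Finset.range (N+3), (hasseDeriv 1 g).coeff i * 1^i
        = ((i+1 : ℕ) : ℤ) * g.coeff (i+1) := by
      intro i _
      rw [one_pow, mul_one, hasseDeriv_coeff]
      simp
    rw [Finset.sum_congr rfl this,
      Finset.sum_range_succ' (fun j => (j:ℤ) * g.coeff j) (N+3)]
    simp
  have hH2 : (hasseDeriv 2 g).eval 1
      = ∑ j ∈ Finset.range (N+4), (j.choose 2 : ℤ) * g.coeff j := by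
    rw [eval_eq_sum_range' (n := N+2)
      (lt_of_le_of_lt (natDegree_hasseDeriv_le g 2) (by omega)) 1]
    have : ∀ i ∈ Finset.range (N+2), (hasseDeriv 2 g).coeff i * 1^i
        = (((i+2).choose 2 : ℕ) : ℤ) * g.coeff (i+2) := by
      intro i _
      rw [one_pow, mul_one, hasseDeriv_coeff]
    rw [Finset.sum_congr rfl this,
      Finset.sum_range_succ' (fun j => (j.choose 2 : ℤ) * g.coeff j) (N+3),
      Finset.sum_range_succ' (fun j => ((j+1).choose 2 : ℤ) * g.coeff (j+1)) (N+2)]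
    simp
  -- odd coefficient sum expansion
  have hOddExt : g.coeff 1 + oddCoeffSum g
      = ∑ j ∈ (Finset.range (N+4)).filter (fun j => Odd j), g.coeff j := by
    have h1mem : (1:ℕ) ∈ (Finset.range (N+4)).filter (fun j => Odd j) := by
      simp only [Finset.mem_filter, Finset.mem_range]
      exact ⟨by omega, odd_one⟩
    rw [← Finset.add_sum_erase _ _ h1mem]
    congr 1
    have herase : ((Finset.range (N+4)).filter (fun j => Odd j)).erase 1
        = (Finset.range (N+4)).filter (fun j => Odd j ∧ 3 ≤ j) := by
      ext j
      simp only [Finset.mem_erase, Finset.mem_filter, Finset.mem_range]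
      constructor
      · rintro ⟨h1, h2, h3⟩
        refine ⟨h2, h3, ?_⟩
        rcases h3 with ⟨k, hk⟩
        omega
      · rintro ⟨h2, h3, h4⟩
        exact ⟨by omega, h2, h3⟩
    rw [herase]
    unfold oddCoeffSum
    apply Finset.sum_subset
    · exact Finset.filter_subset_filter _ (Finset.range_subset_range.mpr (by omega))
    · intro j hj hnj
      simp only [Finset.mem_filter, Finset.mem_range] at hj hnj
      have : ¬ j < N+1 := fun h => hnj ⟨h, hj.2⟩
      exact coeff_eq_zero_of_natDegree_lt (by omega)
  have key : (4:ℤ) ∣ (∑ j ∈ Finset.range (N+4), ((j:ℤ) + 2*(j.choose 2 : ℤ)) * g.coeff j)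
      - (g.coeff 1 + oddCoeffSum g) := by
    rw [hOddExt, Finset.sum_filter, ← Finset.sum_sub_distrib]
    apply Finset.dvd_sum
    intro j _
    have h := helper_mod4 j
    have heq : ((j:ℤ) + 2*(j.choose 2:ℤ)) * g.coeff j - (if Odd j then g.coeff j else 0)
        = (((j:ℤ) + 2*(j.choose 2:ℤ)) - (if Odd j then 1 else 0)) * g.coeff j := by
      split <;> ring
    rw [heq]
    exact h.mul_right _
  have hW : (∑ j ∈ Finset.range (N+4), ((j:ℤ) + 2*(j.choose 2 : ℤ)) * g.coeff j)
      = (hasseDeriv 1 g).eval 1 + 2 * (hasseDeriv 2 g).eval 1 := by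
    rw [hD1, hH2, Finset.mul_sum, ← Finset.sum_add_distrib]
    apply Finset.sum_congr rfl
    intro j _
    ring
  apply Int.modEq_zero_iff_dvd.mpr
  have hb2' : (4:ℤ) ∣ 2 * g.coeff 2 := by
    obtain ⟨c, hc⟩ := hb2
    exact ⟨c, by omega⟩
  have h4 : (4:ℤ) ∣ 2*((k₀+k₁)+(m₀+m₁)) := by
    have e : 2*((k₀+k₁)+(m₀+m₁))
        = (2*m₀ - g.coeff 2 * 2) + (2*m₁ - (hasseDeriv 2 g).eval 1 * 2)
          + ((∑ j ∈ Finset.range (N+4), ((j:ℤ) + 2*(j.choose 2 : ℤ)) * g.coeff j)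
            - (g.coeff 1 + oddCoeffSum g))
          + oddCoeffSum g + 2 * g.coeff 2 + 4 * k₀ := by
      rw [hW]
      linarith [hk₀', hk₁']
    rw [e]
    exact dvd_add (dvd_add (dvd_add (dvd_add (dvd_add hS0 hS1) key) hodd) hb2') ⟨k₀, rfl⟩
  obtain ⟨c, hc⟩ := h4
  exact ⟨c, by omega⟩
end
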